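/- arXiv:1011.3895 — 7 statements merged into one kernel-verified Lean document; each statement's English description precedes it below -/
import Mathlib

section
/- Let (φ(k,l))_{k,l≥0} be real constants such that φ(k,l) ≥ 0 and φ(k,l) = φ(k+1,l) + φ(k,l+1) for all k,l ≥ 0. Then there exists a unique finite Borel measure ν on [0,1] such that φ(k,l) = ∫ q^k (1-q)^l ν(dq) for all k,l ≥ 0. -/
/-!
For each `n` the row `i ↦ (n choose i) φ(i, n - i)` is a measure `μₙ` on the grid `{i / n}` of
total mass `φ(0,0)`, by the recursion and Pascal's rule. Since
`(n+1 choose i+1) (i+1)/(n+1) = (n choose i)`, the `(k+1)`-st moment of `μₙ₊₁` differs by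
`O(k / n)` from the `k`-th moment of the measure built from the shifted array `φ(· + 1, ·)`, so by
induction on `k` the `k`-th moments of `μₙ` tend to `φ(k,0)`. Finite measures of bounded mass on
`[0,1]` form a weakly compact set, so `(μₙ)` has a cluster point `ν`, whose moments are then
`φ(k,0)`; the recursion recovers `φ(k,l) = ∫ qᵏ (1-q)ˡ dν`. Uniqueness holds because
polynomials are dense in `C([0,1])`.
-/

open MeasureTheory Finset Filter Topology

section RecursiveArray

variable {φ : ℕ → ℕ → ℝ}

theorem sum_antidiagonal_choose_mul_eq (hrec : ∀ k l, φ k l = φ (k + 1) l + φ k (l + 1))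
    (n : ℕ) : ∑ ij ∈ antidiagonal n, (n.choose ij.1 : ℝ) * φ ij.1 ij.2 = φ 0 0 := by
  induction n with
  | zero => simp
  | succ n ih =>
    rw [sum_antidiagonal_choose_succ_mul, ← sum_add_distrib, ← ih]
    refine sum_congr rfl fun ij hij => ?_
    rw [Nat.choose_symm_of_eq_add (mem_antidiagonal.mp hij).symm, hrec ij.1 ij.2]
    ring

noncomputable def binomialMoment (φ : ℕ → ℕ → ℝ) (n k : ℕ) : ℝ :=
  ∑ ij ∈ antidiagonal n, (n.choose ij.1 : ℝ) * φ ij.1 ij.2 * ((ij.1 : ℝ) / n) ^ k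

theorem binomialMoment_zero (hrec : ∀ k l, φ k l = φ (k + 1) l + φ k (l + 1)) (n : ℕ) :
    binomialMoment φ n 0 = φ 0 0 := by
  simpa [binomialMoment] using sum_antidiagonal_choose_mul_eq hrec n

theorem binomialMoment_succ_succ (n k : ℕ) :
    binomialMoment φ (n + 1) (k + 1) = ∑ ij ∈ antidiagonal n,
      (n.choose ij.1 : ℝ) * φ (ij.1 + 1) ij.2 * (((ij.1 : ℝ) + 1) / (n + 1)) ^ k := by
  rw [binomialMoment, Nat.sum_antidiagonal_succ]
  simp only [Nat.cast_zero, zero_div, zero_pow k.succ_ne_zero, mul_zero, zero_add]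
  refine sum_congr rfl fun ij _ => ?_
  have h : ((n + 1).choose (ij.1 + 1) : ℝ) * (ij.1 + 1) = (n + 1) * n.choose ij.1 := by
    exact_mod_cast (Nat.add_one_mul_choose_eq n ij.1).symm
  push_cast
  rw [pow_succ]
  field_simp
  linear_combination φ (ij.1 + 1) ij.2 * h

theorem abs_add_one_div_add_one_sub_div_le {i n : ℕ} (h : i ≤ n) :
    |((i : ℝ) + 1) / (n + 1) - i / n| ≤ 1 / (n + 1) := by
  rcases Nat.eq_zero_or_pos n with rfl | hn
  · obtain rfl : i = 0 := by omega
    simp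
  have hn' : (0 : ℝ) < n := by exact_mod_cast hn
  have hi : (i : ℝ) ≤ n := by exact_mod_cast h
  have key : ((i : ℝ) + 1) / (n + 1) - i / n = (n - i) / (n * (n + 1)) := by
    field_simp; ring
  rw [key, abs_of_nonneg (div_nonneg (by linarith) (by positivity)),
    div_le_div_iff₀ (by positivity) (by positivity)]
  nlinarith

theorem abs_pow_sub_pow_le_of_mem_Icc {x y : ℝ} (hx : x ∈ Set.Icc (0 : ℝ) 1)
    (hy : y ∈ Set.Icc (0 : ℝ) 1) (k : ℕ) : |x ^ k - y ^ k| ≤ k * |x - y| := by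
  have hmax : max |x| |y| ^ (k - 1) ≤ 1 := by
    refine pow_le_one₀ (le_max_of_le_left (abs_nonneg x)) (max_le ?_ ?_)
    · rw [abs_of_nonneg hx.1]; exact hx.2
    · rw [abs_of_nonneg hy.1]; exact hy.2
  calc |x ^ k - y ^ k| ≤ |x - y| * k * max |x| |y| ^ (k - 1) := abs_pow_sub_pow_le x y k
    _ ≤ |x - y| * k * 1 := by gcongr
    _ = k * |x - y| := by ring

theorem abs_binomialMoment_succ_succ_sub_le (hpos : ∀ k l, 0 ≤ φ k l)
    (hrec : ∀ k l, φ k l = φ (k + 1) l + φ k (l + 1)) (n k : ℕ) :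
    |binomialMoment φ (n + 1) (k + 1) - binomialMoment (fun i j => φ (i + 1) j) n k|
      ≤ k * φ 1 0 * (1 / (n + 1)) := by
  rw [binomialMoment_succ_succ, binomialMoment, ← sum_sub_distrib]
  calc _ ≤ ∑ ij ∈ antidiagonal n,
          (n.choose ij.1 : ℝ) * φ (ij.1 + 1) ij.2 * (k * (1 / (n + 1))) := by
        refine (abs_sum_le_sum_abs _ _).trans (sum_le_sum fun ij hij => ?_)
        have hi : ij.1 ≤ n := HasAntidiagonal.antidiagonal.fst_le hij
        have hw : 0 ≤ (n.choose ij.1 : ℝ) * φ (ij.1 + 1) ij.2 :=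
          mul_nonneg (Nat.cast_nonneg _) (hpos _ _)
        rw [← mul_sub, abs_mul, abs_of_nonneg hw]
        gcongr
        refine (abs_pow_sub_pow_le_of_mem_Icc ?_ ?_ k).trans ?_
        · exact unitInterval.div_mem (by positivity) (by positivity)
            (by exact_mod_cast Nat.succ_le_succ hi)
        · exact unitInterval.div_mem (by positivity) (by positivity) (by exact_mod_cast hi)
        · gcongr
          exact abs_add_one_div_add_one_sub_div_le hi
    _ = k * φ 1 0 * (1 / (n + 1)) := by
        rw [← sum_mul, sum_antidiagonal_choose_mul_eq (φ := fun i j => φ (i + 1) j)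
          (fun k l => hrec (k + 1) l)]
        ring

theorem tendsto_binomialMoment (hpos : ∀ k l, 0 ≤ φ k l)
    (hrec : ∀ k l, φ k l = φ (k + 1) l + φ k (l + 1)) (k : ℕ) :
    Tendsto (fun n => binomialMoment φ n k) atTop (𝓝 (φ k 0)) := by
  induction k generalizing φ with
  | zero => simp only [binomialMoment_zero hrec, tendsto_const_nhds]
  | succ k ih =>
    rw [← tendsto_add_atTop_iff_nat 1]
    refine (ih (fun i j => hpos (i + 1) j) (fun i j => hrec (i + 1) j)).congr_dist ?_
    have hbound := tendsto_one_div_add_atTop_nhds_zero_nat.const_mul ((k : ℝ) * φ 1 0)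
    rw [mul_zero] at hbound
    refine squeeze_zero (fun n => dist_nonneg) (fun n => ?_) hbound
    rw [dist_comm, Real.dist_eq]
    exact abs_binomialMoment_succ_succ_sub_le hpos hrec n k

end RecursiveArray

theorem MapClusterPt.eq_of_tendsto {α X : Type*} [TopologicalSpace X] [T2Space X] {F : Filter α}
    {u : α → X} {x y : X} (hx : MapClusterPt x F u) (hy : Tendsto u F (𝓝 y)) : x = y :=
  eq_of_nhds_neBot (ClusterPt.mono hx hy)

noncomputable def binomialMeasure (φ : ℕ → ℕ → ℝ) (n : ℕ) : Measure (Set.Icc (0 : ℝ) 1) :=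
  -- `projIcc` only spares a membership proof: `i ≤ n` on the antidiagonal
  ∑ ij ∈ antidiagonal n, ((n.choose ij.1 : ℝ) * φ ij.1 ij.2).toNNReal •
    Measure.dirac (Set.projIcc 0 1 zero_le_one ((ij.1 : ℝ) / n))

instance (φ : ℕ → ℕ → ℝ) (n : ℕ) : IsFiniteMeasure (binomialMeasure φ n) := by
  unfold binomialMeasure; infer_instance

theorem integral_pow_binomialMeasure {φ : ℕ → ℕ → ℝ} (hpos : ∀ k l, 0 ≤ φ k l) (n k : ℕ) :
    ∫ q, (q : ℝ) ^ k ∂binomialMeasure φ n = binomialMoment φ n k := by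
  rw [binomialMeasure, integral_finsetSum_measure fun _ _ => Integrable.smul_measure_nnreal
    (integrable_dirac enorm_lt_top)]
  refine sum_congr rfl fun ij hij => ?_
  have hi : (ij.1 : ℝ) / n ∈ Set.Icc (0 : ℝ) 1 := unitInterval.div_mem (by positivity)
    (by positivity) (by exact_mod_cast HasAntidiagonal.antidiagonal.fst_le hij)
  rw [integral_smul_nnreal_measure, integral_dirac, Set.projIcc_of_mem _ hi, NNReal.smul_def,
    Real.coe_toNNReal _ (mul_nonneg (Nat.cast_nonneg _) (hpos _ _)), smul_eq_mul]

theorem exists_isFiniteMeasure_integral_pow_eq {φ : ℕ → ℕ → ℝ} (hpos : ∀ k l, 0 ≤ φ k l)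
    (hrec : ∀ k l, φ k l = φ (k + 1) l + φ k (l + 1)) :
    ∃ ν : Measure (Set.Icc (0 : ℝ) 1), IsFiniteMeasure ν ∧ ∀ k, ∫ q, (q : ℝ) ^ k ∂ν = φ k 0 := by
  let μ : ℕ → FiniteMeasure (Set.Icc (0 : ℝ) 1) := fun n => ⟨binomialMeasure φ n, inferInstance⟩
  have hmass (n : ℕ) : (μ n).mass ≤ (φ 0 0).toNNReal := by
    have h : (binomialMeasure φ n).real Set.univ = φ 0 0 := by
      simpa [binomialMoment_zero hrec] using integral_pow_binomialMeasure hpos n 0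
    rw [← h, measureReal_def]
    exact Real.toNNReal_coe.ge
  obtain ⟨ν, -, hν⟩ := (isCompact_setOfPred_finiteMeasure_le_of_compactSpace _
    (φ 0 0).toNNReal).exists_mapClusterPt (f := atTop) (u := μ)
    (tendsto_principal.2 (Eventually.of_forall hmass))
  refine ⟨ν, inferInstance, fun k => ?_⟩
  let g : C(Set.Icc (0 : ℝ) 1, ℝ) := ⟨fun q => (q : ℝ) ^ k, by fun_prop⟩
  have hg := (FiniteMeasure.continuous_integral_continuousMap g).continuousAt (x := ν)
  refine (hν.continuousAt_comp hg).eq_of_tendsto ?_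
  show Tendsto (fun n => ∫ q, (q : ℝ) ^ k ∂binomialMeasure φ n) atTop _
  simpa only [integral_pow_binomialMeasure hpos] using tendsto_binomialMoment hpos hrec k

theorem integral_pow_mul_one_sub_pow_eq {φ : ℕ → ℕ → ℝ}
    (hrec : ∀ k l, φ k l = φ (k + 1) l + φ k (l + 1))
    (ν : Measure (Set.Icc (0 : ℝ) 1)) [IsFiniteMeasure ν] (h : ∀ k, ∫ q, (q : ℝ) ^ k ∂ν = φ k 0)
    (k l : ℕ) : ∫ q, (q : ℝ) ^ k * (1 - (q : ℝ)) ^ l ∂ν = φ k l := by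
  induction l generalizing k with
  | zero => simpa using h k
  | succ l ih =>
    have hint (k : ℕ) :
        Integrable (fun q : Set.Icc (0 : ℝ) 1 => (q : ℝ) ^ k * (1 - (q : ℝ)) ^ l) ν :=
      (by fun_prop : Continuous _).integrable_of_hasCompactSupport (.of_compactSpace _)
    calc ∫ q, (q : ℝ) ^ k * (1 - (q : ℝ)) ^ (l + 1) ∂ν
        = ∫ q, ((q : ℝ) ^ k * (1 - (q : ℝ)) ^ l - (q : ℝ) ^ (k + 1) * (1 - (q : ℝ)) ^ l) ∂ν := by
          congr 1 with q; ring
      _ = φ k (l + 1) := by rw [integral_sub (hint k) (hint (k + 1)), ih, ih, hrec k l]; ring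

theorem lipschitzWith_integral_continuousMap {X : Type*} [TopologicalSpace X] [CompactSpace X]
    [MeasurableSpace X] [OpensMeasurableSpace X] (μ : Measure X) [IsFiniteMeasure μ] :
    LipschitzWith (μ.real Set.univ).toNNReal fun f : C(X, ℝ) => ∫ x, f x ∂μ := by
  refine LipschitzWith.of_dist_le_mul fun f g => ?_
  have hint (f : C(X, ℝ)) : Integrable f μ :=
    f.continuous.integrable_of_hasCompactSupport (.of_compactSpace _)
  rw [Real.dist_eq, ← integral_sub (hint f) (hint g), Real.coe_toNNReal _ measureReal_nonneg,
    dist_eq_norm, ← BoundedContinuousFunction.norm_mkOfCompact]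
  exact (BoundedContinuousFunction.mkOfCompact (f - g)).norm_integral_le_mul_norm μ

theorem ext_of_forall_integral_pow_eq {a b : ℝ} {μ ν : Measure (Set.Icc a b)} [IsFiniteMeasure μ]
    [IsFiniteMeasure ν] (h : ∀ k : ℕ, ∫ x, (x : ℝ) ^ k ∂μ = ∫ x, (x : ℝ) ^ k ∂ν) : μ = ν := by
  have hpoly (p : Polynomial ℝ) : ∫ x, p.eval (x : ℝ) ∂μ = ∫ x, p.eval (x : ℝ) ∂ν := by
    have hint (p : Polynomial ℝ) (μ : Measure (Set.Icc a b)) [IsFiniteMeasure μ] :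
        Integrable (fun x : Set.Icc a b => p.eval (x : ℝ)) μ :=
      (by fun_prop : Continuous _).integrable_of_hasCompactSupport (.of_compactSpace _)
    induction p using Polynomial.induction_on' with
    | add p q hp hq =>
      simp only [Polynomial.eval_add]
      rw [integral_add (hint p μ) (hint q μ), integral_add (hint p ν) (hint q ν), hp, hq]
    | monomial n c =>
      simp only [Polynomial.eval_monomial]
      rw [integral_const_mul, integral_const_mul, h]
  have hclosed : IsClosed {f : C(Set.Icc a b, ℝ) | ∫ x, f x ∂μ = ∫ x, f x ∂ν} :=
    isClosed_eq (lipschitzWith_integral_continuousMap μ).continuous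
      (lipschitzWith_integral_continuousMap ν).continuous
  refine ext_of_forall_integral_eq_of_IsFiniteMeasure fun f => ?_
  have hf := continuousMap_mem_polynomialFunctions_closure a b f.toContinuousMap
  rw [← SetLike.mem_coe, Subalgebra.topologicalClosure_coe, polynomialFunctions_coe] at hf
  exact closure_minimal (by rintro _ ⟨p, rfl⟩; exact hpoly p) hclosed hf

/-- Hausdorff moment problem variant: a doubly-indexed nonnegative array satisfying the
recursion `φ(k,l) = φ(k+1,l) + φ(k,l+1)` is the joint moment array of a unique finite
measure on `[0,1]`. -/
theorem stmt0 (φ : ℕ → ℕ → ℝ)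
    (hpos : ∀ k l : ℕ, 0 ≤ φ k l)
    (hrec : ∀ k l : ℕ, φ k l = φ (k + 1) l + φ k (l + 1)) :
    ∃! ν : Measure (Set.Icc (0 : ℝ) 1),
      IsFiniteMeasure ν ∧
        ∀ k l : ℕ, φ k l = ∫ q, (q : ℝ) ^ k * (1 - (q : ℝ)) ^ l ∂ν := by
  obtain ⟨ν, hν, hmom⟩ := exists_isFiniteMeasure_integral_pow_eq hpos hrec
  refine ⟨ν, ⟨hν, fun k l => (integral_pow_mul_one_sub_pow_eq hrec ν hmom k l).symm⟩, ?_⟩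
  rintro ν' ⟨hν', hmom'⟩
  refine ext_of_forall_integral_pow_eq fun k => ?_
  have hk := hmom' k 0
  simp only [pow_zero, mul_one] at hk
  rw [← hk, hmom]
end

section
/- Let β ∈ ℝ and ν a finite measure on [0,1]. Any two functions θ, θ' : ℕ² → ℝ that both satisfy: θ(k,l) ≥ 0 for k,l ≥ 1, θ(k,l) = θ(k+1,l) + θ(k,l+1) for all k,l ≥ 0, θ(k,l) = ∫ q^{k-1}(1-q)^{l-1} ν(dq) for k,l ≥ 1, and θ(1,0) - θ(0,1) = β, must be related by θ'(k,l) = θ(k,l) + c(1_{k=0} + 1_{l=0}) for some constant c ∈ ℝ and all k,l ≥ 0. -/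
open MeasureTheory

/-- Any two admissible parametrizations `θ, θ'` of the Howitt-Warren martingale problem
with the same drift `β` and characteristic measure `ν` differ by
`c (1_{k=0} + 1_{l=0})` for some constant `c`. -/
theorem stmt2 (ν : Measure (Set.Icc (0 : ℝ) 1)) [IsFiniteMeasure ν] (β : ℝ)
    (θ θ' : ℕ → ℕ → ℝ)
    (hpos : ∀ k l : ℕ, 1 ≤ k → 1 ≤ l → 0 ≤ θ k l)
    (hrec : ∀ k l : ℕ, θ k l = θ (k + 1) l + θ k (l + 1))
    (hmom : ∀ k l : ℕ, 1 ≤ k → 1 ≤ l →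
      θ k l = ∫ q, (q : ℝ) ^ (k - 1) * (1 - (q : ℝ)) ^ (l - 1) ∂ν)
    (hβ : θ 1 0 - θ 0 1 = β)
    (hpos' : ∀ k l : ℕ, 1 ≤ k → 1 ≤ l → 0 ≤ θ' k l)
    (hrec' : ∀ k l : ℕ, θ' k l = θ' (k + 1) l + θ' k (l + 1))
    (hmom' : ∀ k l : ℕ, 1 ≤ k → 1 ≤ l →
      θ' k l = ∫ q, (q : ℝ) ^ (k - 1) * (1 - (q : ℝ)) ^ (l - 1) ∂ν)
    (hβ' : θ' 1 0 - θ' 0 1 = β) :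
    ∃ c : ℝ, ∀ k l : ℕ,
      θ' k l = θ k l + c * ((if k = 0 then (1 : ℝ) else 0) + (if l = 0 then (1 : ℝ) else 0)) := by
  have hd : ∀ k l, 1 ≤ k → 1 ≤ l → θ' k l = θ k l := by
    intro k l hk hl; rw [hmom k l hk hl, hmom' k l hk hl]
  refine ⟨θ' 1 0 - θ 1 0, ?_⟩
  have htop : ∀ k, 1 ≤ k → θ' k 0 - θ k 0 = θ' 1 0 - θ 1 0 := by
    intro k hk
    induction k with
    | zero => omega
    | succ n ih =>
      rcases Nat.lt_or_ge 1 (n + 1) with h | h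
      · have hn : 1 ≤ n := by omega
        have := ih hn
        have r := hrec n 0
        have r' := hrec' n 0
        have e := hd n 1 hn le_rfl
        linarith
      · have : n = 0 := by omega
        subst this; ring
  have hleft : ∀ l, 1 ≤ l → θ' 0 l - θ 0 l = θ' 1 0 - θ 1 0 := by
    intro l hl
    induction l with
    | zero => omega
    | succ n ih =>
      rcases Nat.lt_or_ge 1 (n + 1) with h | h
      · have hn : 1 ≤ n := by omega
        have := ih hn
        have r := hrec 0 n
        have r' := hrec' 0 n
        have e := hd 1 n le_rfl hn
        linarith
      · have : n = 0 := by omega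
        subst this; linarith
  intro k l
  rcases Nat.eq_zero_or_pos k with hk | hk
  · subst hk
    rcases Nat.eq_zero_or_pos l with hl | hl
    · subst hl
      have r := hrec 0 0
      have r' := hrec' 0 0
      have h1 := hleft 1 le_rfl
      simp only [if_pos rfl]
      norm_num
      linarith
    · have := hleft l hl
      simp only [if_pos rfl, if_neg (by omega : l ≠ 0)]
      norm_num
      linarith
  · rcases Nat.eq_zero_or_pos l with hl | hl
    · subst hl
      have := htop k hk
      simp only [if_neg (by omega : k ≠ 0), if_pos rfl]
      norm_num
      linarith
    · have := hd k l hk hl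
      simp only [if_neg (by omega : k ≠ 0), if_neg (by omega : l ≠ 0)]
      norm_num
      linarith
end

section
/- Let T > 0 and let ρ be a finite Borel measure on [0,T]. Let A_k, A ⊆ [0,T] be Borel sets such that ∫_{[0,t]} 1_{A_k} dρ → ∫_{[0,t]} 1_A dρ for every t ∈ [0,T]. Then ∫_{[0,T]} |1_{A_k} - 1_A| dρ → 0 as k → ∞, i.e. ρ(A_k Δ A) → 0 where Δ denotes symmetric difference. -/
/-!
The measures `ρ.restrict (A k)` are all dominated by the finite measure `ρ`, and by hypothesis
they converge to `ρ.restrict B` on the half-lines `Iic t`, a π-system generating the Borel sets.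
The sets on which they converge form a Dynkin system (countable additivity passes to the limit
by dominated convergence for series, with majorant `ρ`), so they converge on every Borel set.
Taking the sets `ℝ` and `B` gives `ρ (A k) → ρ B` and `ρ (A k ∩ B) → ρ B`, hence
`ρ (A k ∆ B) = (ρ (A k) - ρ (A k ∩ B)) + (ρ B - ρ (A k ∩ B)) → 0`.
-/

open MeasureTheory Filter Set Topology
open scoped symmDiff Function

namespace MeasureTheory

variable {α ι : Type*} {m : MeasurableSpace α}

theorem measureReal_iUnion_eq_tsum {μ : Measure α} [IsFiniteMeasure μ] {f : ℕ → Set α}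
    (hd : Pairwise (Disjoint on f)) (hf : ∀ j, MeasurableSet (f j)) :
    μ.real (⋃ j, f j) = ∑' j, μ.real (f j) := by
  rw [measureReal_def, measure_iUnion hd hf, ENNReal.tsum_toReal_eq fun j => measure_ne_top _ _]
  rfl

theorem tendsto_measureReal_of_isPiSystem {l : Filter ι} {ρ ν : Measure α} {μ : ι → Measure α}
    [IsFiniteMeasure ρ] [IsFiniteMeasure ν] (hμρ : ∀ i, μ i ≤ ρ) {C : Set (Set α)}
    (hgen : m = MeasurableSpace.generateFrom C) (hC : IsPiSystem C)
    (huniv : Tendsto (fun i => (μ i).real univ) l (𝓝 (ν.real univ)))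
    (hbasic : ∀ s ∈ C, Tendsto (fun i => (μ i).real s) l (𝓝 (ν.real s)))
    {E : Set α} (hE : MeasurableSet E) :
    Tendsto (fun i => (μ i).real E) l (𝓝 (ν.real E)) := by
  have hfin : ∀ i, IsFiniteMeasure (μ i) := fun i => isFiniteMeasure_of_le ρ (hμρ i)
  induction E, hE using MeasurableSpace.induction_on_inter hgen hC with
  | empty => simpa using tendsto_const_nhds
  | basic s hs => exact hbasic s hs
  | compl s hs ih =>
    simp only [measureReal_compl hs]
    exact huniv.sub ih
  | iUnion f hd hf ih =>
    simp only [measureReal_iUnion_eq_tsum hd hf]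
    refine tendsto_tsum_of_dominated_convergence (summable_measure_toReal (μ := ρ) hf hd) ih
      (Eventually.of_forall fun i j => ?_)
    rw [Real.norm_of_nonneg measureReal_nonneg]
    exact ENNReal.toReal_mono (measure_ne_top _ _) (hμρ i (f j))

theorem measureReal_symmDiff_eq_sub {μ : Measure α} [IsFiniteMeasure μ] {s t : Set α}
    (hs : MeasurableSet s) (ht : MeasurableSet t) :
    μ.real (s ∆ t) = (μ.real s - μ.real (s ∩ t)) + (μ.real t - μ.real (s ∩ t)) := by
  rw [measureReal_symmDiff_eq hs ht]
  have hs_split := measureReal_inter_add_sdiff (μ := μ) (s := s) ht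
  have ht_split := measureReal_inter_add_sdiff (μ := μ) (s := t) hs
  rw [inter_comm t s] at ht_split
  linarith

theorem tendsto_measureReal_symmDiff_of_tendsto {l : Filter ι} {μ : Measure α} [IsFiniteMeasure μ]
    {A : ι → Set α} {B : Set α} (hA : ∀ i, MeasurableSet (A i)) (hB : MeasurableSet B)
    (huniv : Tendsto (fun i => μ.real (A i)) l (𝓝 (μ.real B)))
    (hinter : Tendsto (fun i => μ.real (A i ∩ B)) l (𝓝 (μ.real B))) :
    Tendsto (fun i => μ.real (A i ∆ B)) l (𝓝 0) := by
  simp only [measureReal_symmDiff_eq_sub (hA _) hB]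
  simpa using (huniv.sub hinter).add ((tendsto_const_nhds (x := μ.real B)).sub hinter)

theorem setIntegral_indicator_one_eq_measureReal {μ : Measure α} {s t : Set α}
    (hs : MeasurableSet s) :
    ∫ x in t, s.indicator (fun _ => (1 : ℝ)) x ∂μ = μ.real (s ∩ t) :=
  (integral_indicator_one hs).trans (measureReal_restrict_apply hs)

end MeasureTheory

theorem Set.abs_indicator_one_sub_indicator_one {α : Type*} (s t : Set α) (x : α) :
    |s.indicator (fun _ => (1 : ℝ)) x - t.indicator (fun _ => 1) x|
      = (s ∆ t).indicator (fun _ => 1) x := by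
  rw [← Set.apply_indicator_symmDiff abs_neg,
    abs_of_nonneg (Set.indicator_nonneg (fun _ _ => zero_le_one) x)]

theorem Set.Iic_inter_eq_inter_Icc_min {S : Set ℝ} {T : ℝ} (hS : S ⊆ Icc 0 T) (t : ℝ) :
    Iic t ∩ S = S ∩ Icc 0 (min t T) := by
  ext x
  constructor
  · rintro ⟨hxt, hx⟩
    exact ⟨hx, (hS hx).1, le_min hxt (hS hx).2⟩
  · rintro ⟨hx, -, hxt⟩
    exact ⟨le_trans hxt (min_le_left _ _), hx⟩

open MeasureTheory

theorem tendsto_measureReal_inter_of_tendsto_Icc {ι : Type*} {l : Filter ι} {ρ : Measure ℝ}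
    [IsFiniteMeasure ρ] {T : ℝ} (hT : 0 ≤ T) {A : ι → Set ℝ} {B : Set ℝ}
    (hAsub : ∀ i, A i ⊆ Icc 0 T) (hBsub : B ⊆ Icc 0 T)
    (hconv : ∀ t ∈ Icc 0 T, Tendsto (fun i => ρ.real (A i ∩ Icc 0 t)) l
      (𝓝 (ρ.real (B ∩ Icc 0 t))))
    {E : Set ℝ} (hE : MeasurableSet E) :
    Tendsto (fun i => ρ.real (E ∩ A i)) l (𝓝 (ρ.real (E ∩ B))) := by
  have hIic (t : ℝ) : Tendsto (fun i => ρ.real (Iic t ∩ A i)) l (𝓝 (ρ.real (Iic t ∩ B))) := by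
    simp only [Iic_inter_eq_inter_Icc_min (hAsub _), Iic_inter_eq_inter_Icc_min hBsub]
    rcases le_or_gt 0 t with ht | ht
    · exact hconv _ ⟨le_min ht hT, min_le_right _ _⟩
    · simpa [Icc_eq_empty_of_lt ((min_le_left t T).trans_lt ht)] using tendsto_const_nhds
  have huniv : Tendsto (fun i => ρ.real (A i)) l (𝓝 (ρ.real B)) := by
    simpa [inter_eq_left.mpr (hAsub _), inter_eq_left.mpr hBsub] using hconv T ⟨hT, le_rfl⟩
  simpa only [measureReal_restrict_apply hE] using
    tendsto_measureReal_of_isPiSystem (μ := fun i => ρ.restrict (A i)) (ν := ρ.restrict B)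
      (fun _ => Measure.restrict_le_self) (borel_eq_generateFrom_Iic ℝ) isPiSystem_Iic
      (by simpa using huniv)
      (by rintro _ ⟨t, rfl⟩; simpa [measureReal_restrict_apply] using hIic t) hE

theorem stmt10_general (T : ℝ) (hT : 0 < T) (ρ : Measure ℝ) [IsFiniteMeasure ρ]
    (A : ℕ → Set ℝ) (B : Set ℝ)
    (hA : ∀ k, MeasurableSet (A k)) (hB : MeasurableSet B)
    (hAsub : ∀ k, A k ⊆ Set.Icc (0 : ℝ) T) (hBsub : B ⊆ Set.Icc (0 : ℝ) T)
    (hconv : ∀ t ∈ Set.Icc (0 : ℝ) T,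
      Tendsto (fun k => ∫ x in Set.Icc (0 : ℝ) t, (A k).indicator (fun _ => (1 : ℝ)) x ∂ρ)
        atTop (nhds (∫ x in Set.Icc (0 : ℝ) t, B.indicator (fun _ => (1 : ℝ)) x ∂ρ))) :
    Tendsto (fun k => ∫ x in Set.Icc (0 : ℝ) T,
        |(A k).indicator (fun _ => (1 : ℝ)) x - B.indicator (fun _ => (1 : ℝ)) x| ∂ρ)
      atTop (nhds 0) ∧
    Tendsto (fun k => ρ (symmDiff (A k) B)) atTop (nhds 0) := by
  simp only [setIntegral_indicator_one_eq_measureReal (hA _),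
    setIntegral_indicator_one_eq_measureReal hB] at hconv
  have hsetwise {E : Set ℝ} (hE : MeasurableSet E) :
      Tendsto (fun k => ρ.real (E ∩ A k)) atTop (𝓝 (ρ.real (E ∩ B))) :=
    tendsto_measureReal_inter_of_tendsto_Icc hT.le hAsub hBsub hconv hE
  have hsymmDiff : Tendsto (fun k => ρ.real (A k ∆ B)) atTop (𝓝 0) :=
    tendsto_measureReal_symmDiff_of_tendsto hA hB (by simpa using hsetwise .univ)
      (by simpa [inter_comm] using hsetwise hB)
  have hsymmDiff_sub (k : ℕ) : A k ∆ B ⊆ Icc 0 T :=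
    symmDiff_subset_union.trans (union_subset (hAsub k) hBsub)
  constructor
  · simpa only [abs_indicator_one_sub_indicator_one, setIntegral_indicator_one_eq_measureReal
      ((hA _).symmDiff hB), inter_eq_left.mpr (hsymmDiff_sub _)] using hsymmDiff
  · simpa using (ENNReal.tendsto_toReal_iff (fun k => measure_ne_top ρ (A k ∆ B))
      ENNReal.zero_ne_top).mp hsymmDiff

/-- If indicators of Borel sets `A_k ⊆ [0,T]` satisfy
`∫_{[0,t]} 1_{A_k} dρ → ∫_{[0,t]} 1_A dρ` for all `t ∈ [0,T]`, then
`∫ |1_{A_k} - 1_A| dρ → 0`, i.e. `ρ(A_k Δ A) → 0`. -/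
theorem stmt10 (T : ℝ) (hT : 0 < T) (ρ : Measure ℝ) [IsFiniteMeasure ρ]
    (hρ : ρ (Set.Icc (0 : ℝ) T)ᶜ = 0)
    (A : ℕ → Set ℝ) (B : Set ℝ)
    (hA : ∀ k, MeasurableSet (A k)) (hB : MeasurableSet B)
    (hAsub : ∀ k, A k ⊆ Set.Icc (0 : ℝ) T) (hBsub : B ⊆ Set.Icc (0 : ℝ) T)
    (hconv : ∀ t ∈ Set.Icc (0 : ℝ) T,
      Tendsto (fun k => ∫ x in Set.Icc (0 : ℝ) t, (A k).indicator (fun _ => (1 : ℝ)) x ∂ρ)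
        atTop (nhds (∫ x in Set.Icc (0 : ℝ) t, B.indicator (fun _ => (1 : ℝ)) x ∂ρ))) :
    Tendsto (fun k => ∫ x in Set.Icc (0 : ℝ) T,
        |(A k).indicator (fun _ => (1 : ℝ)) x - B.indicator (fun _ => (1 : ℝ)) x| ∂ρ)
      atTop (nhds 0) ∧
    Tendsto (fun k => ρ (symmDiff (A k) B)) atTop (nhds 0) :=
  stmt10_general T hT ρ A B hA hB hAsub hBsub hconv
end

section
/- Let E be a Polish space. The pointwise closure of the set of continuous functions f : E → [0,1] equals the set of all Borel measurable functions f : E → [0,1]. If E is locally compact, the same holds with continuous functions replaced by continuous compactly supported functions with values in [0,1]. -/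
/-!
Pointwise convergence of sequences is sequential convergence in the product topology on
`E → ℝ`, so the pointwise closure of `F` is the smallest sequentially closed set containing `F`,
and every continuous operation preserving `F` (such as `1 - f`, `f ⊔ g` and convex combinations)
preserves its closure. Measurable `[0,1]`-valued functions form a sequentially closed set, which
gives one inclusion. Conversely, in a perfectly normal space every open set `U` is `{g ≠ 0}` for a
continuous `g : E → [0,1]`, and `min 1 (n g)` converges to the indicator of `U`. The sets whose
indicators lie in the closure are then closed under complements and countable unions, hence
contain all Borel sets, and a measurable `f : E → [0,1]` is the limit of `⌊n f⌋₊ / n`, a convex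
combination of indicators of superlevel sets of `f`. In the locally compact case, multiplying by
Urysohn functions equal to `1` on an exhausting sequence of compact sets shows that continuous
functions are pointwise limits of compactly supported ones.
-/

open Filter

/-- The smallest set of functions containing `F` and closed under pointwise limits of
sequences. -/
def pointwiseClosure {E : Type*} (F : Set (E → ℝ)) : Set (E → ℝ) :=
  ⋂₀ {G : Set (E → ℝ) | F ⊆ G ∧
    ∀ f : ℕ → E → ℝ, (∀ n, f n ∈ G) →
      ∀ g : E → ℝ, (∀ x, Tendsto (fun n => f n x) atTop (nhds (g x))) → g ∈ G}

open Set

section PointwiseClosure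

variable {E E' : Type*} {F F' G : Set (E → ℝ)}

theorem pointwiseClosure_eq_sInter :
    pointwiseClosure F = ⋂₀ {G | F ⊆ G ∧ IsSeqClosed G} := by
  simp only [pointwiseClosure, IsSeqClosed, tendsto_pi_nhds]
  congr! 4
  exact ⟨fun h _ _ hu hv => h _ hu _ hv, fun h _ hu _ hv => h hu hv⟩

theorem subset_pointwiseClosure (F : Set (E → ℝ)) : F ⊆ pointwiseClosure F := by
  rw [pointwiseClosure_eq_sInter]
  exact subset_sInter fun _ hG => hG.1

theorem isSeqClosed_pointwiseClosure (F : Set (E → ℝ)) : IsSeqClosed (pointwiseClosure F) := by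
  rw [pointwiseClosure_eq_sInter]
  exact fun u v hu hv => mem_sInter.2 fun G hG =>
    hG.2 (fun n => mem_sInter.1 (hu n) G hG) hv

theorem pointwiseClosure_subset (hFG : F ⊆ G) (hG : IsSeqClosed G) : pointwiseClosure F ⊆ G := by
  rw [pointwiseClosure_eq_sInter]
  exact sInter_subset_of_mem ⟨hFG, hG⟩

theorem pointwiseClosure_mono (h : F ⊆ F') : pointwiseClosure F ⊆ pointwiseClosure F' :=
  pointwiseClosure_subset (h.trans (subset_pointwiseClosure F')) (isSeqClosed_pointwiseClosure F')

theorem Set.MapsTo.pointwiseClosure {H : Set (E' → ℝ)} {Φ : (E → ℝ) → (E' → ℝ)}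
    (hΦ : Continuous Φ) (h : MapsTo Φ F (pointwiseClosure H)) :
    MapsTo Φ (pointwiseClosure F) (pointwiseClosure H) :=
  pointwiseClosure_subset h ((isSeqClosed_pointwiseClosure H).preimage hΦ.seqContinuous)

theorem map₂_mem_pointwiseClosure {op : ℝ → ℝ → ℝ} (hop : Continuous (Function.uncurry op))
    (hF : ∀ f ∈ F, ∀ g ∈ F, (fun x => op (f x) (g x)) ∈ F) {f g : E → ℝ}
    (hf : f ∈ pointwiseClosure F) (hg : g ∈ pointwiseClosure F) :
    (fun x => op (f x) (g x)) ∈ pointwiseClosure F := by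
  have hev (x : E) : Continuous fun f : E → ℝ => f x := continuous_apply x
  have hcont : ∀ h : E → ℝ, (Continuous fun f : E → ℝ => fun x => op (f x) (h x)) ∧
      Continuous fun f : E → ℝ => fun x => op (h x) (f x) := fun h =>
    ⟨continuous_pi fun x => (hop.comp₂ (hev x) continuous_const :),
      continuous_pi fun x => (hop.comp₂ continuous_const (hev x) :)⟩
  have hleft : ∀ g ∈ F, MapsTo (fun f : E → ℝ => fun x => op (f x) (g x))
      (pointwiseClosure F) (pointwiseClosure F) := fun g hg =>
    MapsTo.pointwiseClosure (hcont g).1 fun f hf => subset_pointwiseClosure F (hF f hf g hg)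
  exact MapsTo.pointwiseClosure (F := F) (Φ := fun g : E → ℝ => fun x => op (f x) (g x))
    (hcont f).2 (fun g hg => hleft g hg hf) hg

theorem one_sub_mem_pointwiseClosure (hF : ∀ f ∈ F, 1 - f ∈ F) :
    ∀ f ∈ pointwiseClosure F, 1 - f ∈ pointwiseClosure F :=
  MapsTo.pointwiseClosure (Φ := fun f => 1 - f) (continuous_const.sub continuous_id)
    fun f hf => subset_pointwiseClosure F (hF f hf)

theorem sup_mem_pointwiseClosure (hF : ∀ f ∈ F, ∀ g ∈ F, f ⊔ g ∈ F) :
    ∀ f ∈ pointwiseClosure F, ∀ g ∈ pointwiseClosure F, f ⊔ g ∈ pointwiseClosure F :=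
  fun _ hf _ hg => map₂_mem_pointwiseClosure (op := max) continuous_sup hF hf hg

theorem convex_pointwiseClosure (hF : Convex ℝ F) : Convex ℝ (pointwiseClosure F) :=
  fun _ hf _ hg a b ha hb hab => map₂_mem_pointwiseClosure (op := fun p q => a * p + b * q)
    (by fun_prop) (fun _ hf _ hg => hF hf hg ha hb hab) hf hg

end PointwiseClosure

theorem Set.indicator_union_one_eq_sup {α M : Type*} [LinearOrder M] [Zero M] [One M]
    [ZeroLEOneClass M] (s t : Set α) :
    (s ∪ t).indicator (1 : α → M) = s.indicator 1 ⊔ t.indicator 1 := by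
  ext x
  by_cases hs : x ∈ s <;> by_cases ht : x ∈ t <;> simp [hs, ht]

theorem card_filter_Icc_le_mul_eq_floor {t : ℝ} (ht : t ≤ 1) (N : ℕ) :
    {j ∈ Finset.Icc 1 N | ((j : ℕ) : ℝ) ≤ t * N}.card = ⌊t * N⌋₊ := by
  have hfloor : ⌊t * N⌋₊ ≤ N := Nat.floor_le_of_le (mul_le_of_le_one_left N.cast_nonneg ht)
  have hfilter : {j ∈ Finset.Icc 1 N | ((j : ℕ) : ℝ) ≤ t * N} = Finset.Icc 1 ⌊t * N⌋₊ := by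
    ext j
    simp only [Finset.mem_filter, Finset.mem_Icc]
    constructor
    · rintro ⟨⟨hj, -⟩, hjt⟩
      exact ⟨hj, (Nat.le_floor_iff' (by omega)).2 hjt⟩
    · rintro ⟨hj, hjt⟩
      exact ⟨⟨hj, hjt.trans hfloor⟩, (Nat.le_floor_iff' (by omega)).1 hjt⟩
  rw [hfilter, Nat.card_Icc, Nat.add_sub_cancel]

section MeasurableFunctions

variable {E : Type*} [MeasurableSpace E] {G : Set (E → ℝ)}

theorem isSeqClosed_measurable_Icc :
    IsSeqClosed {f : E → ℝ | Measurable f ∧ ∀ x, f x ∈ Icc (0 : ℝ) 1} := fun _ _ hu hf =>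
  ⟨measurable_of_tendsto_metrizable (fun n => (hu n).1) hf, fun x =>
    isClosed_Icc.mem_of_tendsto (tendsto_pi_nhds.1 hf x) (.of_forall fun n => (hu n).2 x)⟩

theorem IsSeqClosed.indicator_mem_of_measurableSet [TopologicalSpace E] [BorelSpace E]
    (hG : IsSeqClosed G) (hcompl : ∀ f ∈ G, 1 - f ∈ G) (hsup : ∀ f ∈ G, ∀ g ∈ G, f ⊔ g ∈ G)
    (hopen : ∀ U : Set E, IsOpen U → U.indicator 1 ∈ G) {A : Set E} (hA : MeasurableSet A) :
    A.indicator 1 ∈ G := by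
  rw [BorelSpace.measurable_eq (α := E)] at hA
  induction A, hA using MeasurableSpace.generateFrom_induction with
  | hC U hU _ => exact hopen U hU
  | empty =>
    rw [indicator_empty']
    simpa using hcompl _ (hopen univ isOpen_univ)
  | compl A _ hA => simpa [indicator_compl] using hcompl _ hA
  | iUnion A _ hA =>
    have hacc (n : ℕ) : (accumulate A n).indicator 1 ∈ G := by
      induction n with
      | zero => simpa using hA 0
      | succ n ih => simpa [indicator_union_one_eq_sup] using hsup _ ih _ (hA (n + 1))
    rw [← iUnion_accumulate]
    exact hG hacc (tendsto_pi_nhds.2 fun x =>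
      (monotone_accumulate.tendsto_indicator _ _ x).mono_right (pure_le_nhds _))

theorem IsSeqClosed.mem_of_measurable (hG : IsSeqClosed G) (hconv : Convex ℝ G)
    (hind : ∀ A, MeasurableSet A → A.indicator 1 ∈ G) {f : E → ℝ} (hf : Measurable f)
    (hf01 : ∀ x, f x ∈ Icc 0 1) : f ∈ G := by
  let s : ℕ → E → ℝ := fun N =>
    ∑ j ∈ Finset.Icc 1 N, (N : ℝ)⁻¹ • {x | (j : ℝ) ≤ f x * N}.indicator 1
  have hs_mem (N : ℕ) : s (N + 1) ∈ G := by
    refine hconv.sum_mem (fun _ _ => by positivity) ?_ fun j _ =>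
      hind _ (measurableSet_le measurable_const (hf.mul_const _))
    simp [mul_inv_cancel₀ (by positivity : (N : ℝ) + 1 ≠ 0)]
  have hs_apply (N : ℕ) (x : E) : s N x = ⌊f x * N⌋₊ / N := by
    simp only [s, Finset.sum_apply, Pi.smul_apply, smul_eq_mul, ← Finset.mul_sum, indicator_apply,
      mem_ofPred_eq, Pi.one_apply, Finset.sum_boole]
    rw [card_filter_Icc_le_mul_eq_floor (hf01 x).2, inv_mul_eq_div]
  refine hG hs_mem (tendsto_pi_nhds.2 fun x => ?_)
  simp only [hs_apply]
  exact ((tendsto_nat_floor_mul_div_atTop (hf01 x).1).comp tendsto_natCast_atTop_atTop).comp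
    (tendsto_add_atTop_nat 1)

end MeasurableFunctions

section ContinuousFunctions

variable {E : Type*} [TopologicalSpace E]

theorem convex_continuous_Icc :
    Convex ℝ {f : E → ℝ | Continuous f ∧ ∀ x, f x ∈ Icc (0 : ℝ) 1} :=
  fun _ hf _ hg a b ha hb hab => ⟨(hf.1.const_smul a).add (hg.1.const_smul b),
    fun x => convex_Icc 0 1 (hf.2 x) (hg.2 x) ha hb hab⟩

theorem indicator_mem_pointwiseClosure_of_isOpen [PerfectlyNormalSpace E] {U : Set E}
    (hU : IsOpen U) :
    U.indicator 1 ∈ pointwiseClosure {f : E → ℝ | Continuous f ∧ ∀ x, f x ∈ Icc (0 : ℝ) 1} := by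
  obtain ⟨g, hg_zero, hg01⟩ :=
    perfectlyNormalSpace_iff_forall_isClosed_preimage_zero.1 ‹_› Uᶜ hU.isClosed_compl
  have hmem (n : ℕ) : (fun x => min 1 (n * g x)) ∈
      pointwiseClosure {f : E → ℝ | Continuous f ∧ ∀ x, f x ∈ Icc (0 : ℝ) 1} :=
    subset_pointwiseClosure _ ⟨by fun_prop, fun x =>
      ⟨le_min zero_le_one (mul_nonneg n.cast_nonneg (hg01 x).1), min_le_left _ _⟩⟩
  refine isSeqClosed_pointwiseClosure _ hmem (tendsto_pi_nhds.2 fun x => ?_)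
  by_cases hx : x ∈ U
  · have hgx : 0 < g x := (hg01 x).1.lt_of_ne' fun h => (hg_zero.symm ▸ h : x ∈ Uᶜ) hx
    have hlarge := (tendsto_natCast_atTop_atTop.atTop_mul_const hgx).eventually_ge_atTop 1
    rw [indicator_of_mem hx]
    exact tendsto_const_nhds.congr' (hlarge.mono fun n hn => (min_eq_left hn).symm)
  · have hgx : g x = 0 := (hg_zero ▸ hx : x ∈ g ⁻¹' {0})
    simp [indicator_of_notMem hx, hgx]

theorem pointwiseClosure_continuous_eq_measurable [PerfectlyNormalSpace E] [MeasurableSpace E]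
    [BorelSpace E] :
    pointwiseClosure {f : E → ℝ | Continuous f ∧ ∀ x, f x ∈ Icc (0 : ℝ) 1}
      = {f : E → ℝ | Measurable f ∧ ∀ x, f x ∈ Icc (0 : ℝ) 1} := by
  set C : Set (E → ℝ) := {f | Continuous f ∧ ∀ x, f x ∈ Icc (0 : ℝ) 1}
  refine Subset.antisymm (pointwiseClosure_subset (fun f hf => ⟨hf.1.measurable, hf.2⟩)
    isSeqClosed_measurable_Icc) ?_
  rintro f ⟨hf, hf01⟩
  have hG := isSeqClosed_pointwiseClosure C
  have hcompl := one_sub_mem_pointwiseClosure (F := C) fun g hg =>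
    ⟨continuous_const.sub hg.1, fun x => ⟨sub_nonneg.2 (hg.2 x).2, sub_le_self 1 (hg.2 x).1⟩⟩
  have hsup := sup_mem_pointwiseClosure (F := C) fun g hg h hh =>
    ⟨hg.1.sup hh.1, fun x => ⟨le_sup_of_le_left (hg.2 x).1, sup_le (hg.2 x).2 (hh.2 x).2⟩⟩
  exact hG.mem_of_measurable (convex_pointwiseClosure convex_continuous_Icc)
    (fun A hA => hG.indicator_mem_of_measurableSet hcompl hsup
      (fun U hU => indicator_mem_pointwiseClosure_of_isOpen hU) hA) hf hf01

theorem continuous_subset_pointwiseClosure_hasCompactSupport [RegularSpace E]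
    [LocallyCompactSpace E] [SigmaCompactSpace E] :
    {f : E → ℝ | Continuous f ∧ ∀ x, f x ∈ Icc (0 : ℝ) 1} ⊆
      pointwiseClosure
        {f : E → ℝ | Continuous f ∧ HasCompactSupport f ∧ ∀ x, f x ∈ Icc (0 : ℝ) 1} := by
  rintro f ⟨hf, hf01⟩
  choose g hg_one _ hg_supp hg01 using fun n => exists_continuous_one_zero_of_isCompact
    (isCompact_compactCovering E n) isClosed_empty (disjoint_empty _)
  refine isSeqClosed_pointwiseClosure _ (x := fun n => f * ⇑(g n)) (fun n =>
      subset_pointwiseClosure _ ⟨hf.mul (g n).continuous, (hg_supp n).mul_left,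
        fun x => unitInterval.mul_mem (hf01 x) (hg01 n x)⟩)
    (tendsto_pi_nhds.2 fun x => ?_)
  obtain ⟨N, hN⟩ := exists_mem_compactCovering x
  exact tendsto_atTop_of_eventually_const (i₀ := N) fun n hn => by
    simp [hg_one n (compactCovering_subset E hn hN)]

theorem pointwiseClosure_hasCompactSupport_eq [RegularSpace E] [LocallyCompactSpace E]
    [SigmaCompactSpace E] :
    pointwiseClosure
        {f : E → ℝ | Continuous f ∧ HasCompactSupport f ∧ ∀ x, f x ∈ Icc (0 : ℝ) 1}
      = pointwiseClosure {f : E → ℝ | Continuous f ∧ ∀ x, f x ∈ Icc (0 : ℝ) 1} :=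
  Subset.antisymm (pointwiseClosure_mono fun _ hf => ⟨hf.1, hf.2.2⟩) <|
    pointwiseClosure_subset continuous_subset_pointwiseClosure_hasCompactSupport
      (isSeqClosed_pointwiseClosure _)

end ContinuousFunctions

/-- On a Polish space, the pointwise closure of the continuous `[0,1]`-valued functions
is the set of Borel measurable `[0,1]`-valued functions; the same holds for compactly
supported continuous functions if the space is locally compact. -/
theorem stmt11 {E : Type*} [TopologicalSpace E] [PolishSpace E]
    [MeasurableSpace E] [BorelSpace E] :
    pointwiseClosure {f : E → ℝ | Continuous f ∧ ∀ x, f x ∈ Set.Icc (0 : ℝ) 1}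
        = {f : E → ℝ | Measurable f ∧ ∀ x, f x ∈ Set.Icc (0 : ℝ) 1} ∧
      (LocallyCompactSpace E →
        pointwiseClosure
            {f : E → ℝ | Continuous f ∧ HasCompactSupport f ∧ ∀ x, f x ∈ Set.Icc (0 : ℝ) 1}
          = {f : E → ℝ | Measurable f ∧ ∀ x, f x ∈ Set.Icc (0 : ℝ) 1}) := by
  refine ⟨pointwiseClosure_continuous_eq_measurable, fun _ => ?_⟩
  rw [pointwiseClosure_hasCompactSupport_eq, pointwiseClosure_continuous_eq_measurable]
end

section
/- Fix n ≥ 1. For nonempty Δ ⊆ {1,…,n} define f_Δ(x) := max_{i∈Δ} x_i on ℝⁿ. Then the family { f_Δ : ∅ ≠ Δ ⊆ {1,…,n} } is linearly independent; in particular it consists of 2ⁿ - 1 linearly independent elements of the space of continuous functions ℝⁿ → ℝ. -/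
open Finset

/-- The functions `f_Δ(x) = max_{i ∈ Δ} x_i`, for nonempty `Δ ⊆ {1,…,n}`, are linearly
independent; there are `2^n - 1` of them. -/
theorem stmt14 (n : ℕ) (hn : 1 ≤ n) :
    LinearIndependent ℝ (fun Δ : {s : Finset (Fin n) // s.Nonempty} =>
        (fun x : Fin n → ℝ => Δ.1.sup' Δ.2 x)) ∧
      Nat.card {s : Finset (Fin n) // s.Nonempty} = 2 ^ n - 1 := by
  constructor
  · rw [Fintype.linearIndependent_iff]
    intro g hg
    have : NeZero n := ⟨by omega⟩
    set c : Finset (Fin n) → ℝ := fun s => if h : s.Nonempty then g ⟨s, h⟩ else 0 with hc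
    -- evaluation of sup' at an indicator vector
    have heval : ∀ (T : Finset (Fin n)) (s : Finset (Fin n)) (hs : s.Nonempty),
        s.sup' hs (fun i => if i ∈ T then (1:ℝ) else 0)
          = if (s ∩ T).Nonempty then 1 else 0 := by
      intro T s hs
      by_cases h : (s ∩ T).Nonempty
      · obtain ⟨i, hi⟩ := h
        rw [mem_inter] at hi
        rw [if_pos ⟨i, mem_inter.2 hi⟩]
        refine le_antisymm (Finset.sup'_le _ _ fun j _ => by split <;> norm_num) ?_
        calc (1:ℝ) = if i ∈ T then 1 else 0 := by rw [if_pos hi.2]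
          _ ≤ _ := Finset.le_sup' (fun i => if i ∈ T then (1:ℝ) else 0) hi.1
      · rw [if_neg h]
        obtain ⟨i, hi⟩ := hs
        refine le_antisymm (Finset.sup'_le _ _ fun j hj => ?_) ?_
        · rw [if_neg fun hjT => h ⟨j, mem_inter.2 ⟨hj, hjT⟩⟩]
        · calc (0:ℝ) = if i ∈ T then 1 else 0 := by
                rw [if_neg fun hiT => h ⟨i, mem_inter.2 ⟨hi, hiT⟩⟩]
            _ ≤ _ := Finset.le_sup' (fun i => if i ∈ T then (1:ℝ) else 0) hi
    -- the key evaluation identity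
    have key : ∀ T : Finset (Fin n),
        ∑ s : Finset (Fin n), c s * (if (s ∩ T).Nonempty then 1 else 0) = 0 := by
      intro T
      have h0 := congrFun hg (fun i => if i ∈ T then (1:ℝ) else 0)
      simp only [Finset.sum_apply, Pi.smul_apply, smul_eq_mul, Pi.zero_apply] at h0
      refine Eq.trans ?_ h0
      have hstep : ∑ s ∈ univ.filter (fun s : Finset (Fin n) => s.Nonempty),
          c s * (if (s ∩ T).Nonempty then (1:ℝ) else 0)
          = ∑ s : Finset (Fin n), c s * (if (s ∩ T).Nonempty then 1 else 0) := by
        refine Finset.sum_filter_of_ne fun s _ hne => ?_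
        by_contra hs
        exact hne (by simp [hc, dif_neg hs])
      rw [← hstep, Finset.sum_subtype (p := fun s : Finset (Fin n) => s.Nonempty) (univ.filter (fun s : Finset (Fin n) => s.Nonempty))
        (fun s => by simp) (fun s => c s * (if (s ∩ T).Nonempty then (1:ℝ) else 0))]
      refine Finset.sum_congr rfl fun x _ => ?_
      rw [heval T x.1 x.2]
      simp [hc, dif_pos x.2]
    set A : ℝ := ∑ s : Finset (Fin n), c s with hA
    set G : Finset (Fin n) → ℝ := fun U => ∑ s ∈ U.powerset, c s with hG
    have hsum : ∀ U : Finset (Fin n), A - G U = 0 → G U = A := by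
      intro U h; linarith
    have key2 : ∀ U : Finset (Fin n), U ≠ univ → G U = A := by
      intro U hU
      have h := key Uᶜ
      have hrw : ∀ s : Finset (Fin n),
          (if (s ∩ Uᶜ).Nonempty then (1:ℝ) else 0) = 1 - (if s ⊆ U then 1 else 0) := by
        intro s
        by_cases hs : s ⊆ U
        · rw [if_pos hs, if_neg, sub_self]
          rintro ⟨i, hi⟩
          rw [mem_inter, Finset.mem_compl] at hi
          exact hi.2 (hs hi.1)
        · rw [if_neg hs, if_pos, sub_zero]
          rw [Finset.not_subset] at hs
          obtain ⟨i, his, hiU⟩ := hs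
          exact ⟨i, mem_inter.2 ⟨his, Finset.mem_compl.2 hiU⟩⟩
      simp only [hrw, mul_sub, mul_one, Finset.sum_sub_distrib] at h
      rw [← hA] at h
      have hpow : ∀ s : Finset (Fin n),
          c s * (if s ⊆ U then (1:ℝ) else 0) = if s ∈ U.powerset then c s else 0 := by
        intro s
        by_cases hs : s ⊆ U
        · rw [if_pos hs, if_pos (Finset.mem_powerset.2 hs), mul_one]
        · rw [if_neg hs, if_neg (fun hm => hs (Finset.mem_powerset.1 hm)), mul_zero]
      simp only [hpow] at h
      rw [Finset.sum_ite_mem, Finset.univ_inter] at h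
      exact hsum U h
    have hGempty : G ∅ = 0 := by
      rw [hG]
      simp [hc]
    have hA0 : A = 0 := by
      rw [← key2 ∅ (by
        intro h
        have : (0 : Fin n) ∈ (∅ : Finset (Fin n)) := h ▸ Finset.mem_univ _
        simp at this), hGempty]
    have Gzero : ∀ U : Finset (Fin n), G U = 0 := by
      intro U
      by_cases hU : U = univ
      · rw [hU, hG]
        simp only [Finset.powerset_univ]
        rw [← hA, hA0]
      · rw [key2 U hU, hA0]
    have hcz : ∀ s : Finset (Fin n), c s = 0 := by
      intro s
      induction s using Finset.strongInduction with
      | _ s ih =>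
        have h := Gzero s
        simp only [hG] at h
        rw [Finset.sum_eq_single s (fun t ht hts => ih t
            (lt_of_le_of_ne (Finset.mem_powerset.1 ht) hts))
          (fun hs => absurd (Finset.mem_powerset.2 le_rfl) hs)] at h
        exact h
    intro Δ
    simpa [hc, dif_pos Δ.2] using hcz Δ.1
  · rw [Nat.card_eq_fintype_card, Fintype.card_subtype]
    have : (univ.filter (fun s : Finset (Fin n) => s.Nonempty)) = univ.erase ∅ := by
      ext s; simp [Finset.nonempty_iff_ne_empty]
    rw [this, Finset.card_erase_of_mem (Finset.mem_univ _), Finset.card_univ,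
      Fintype.card_finset, Fintype.card_fin]
end

section
/- Fix n ≥ 1 and let L_n be the space of continuous functions f : ℝⁿ → ℝ that are linear on each cell C_≺ := { x ∈ ℝⁿ : x_i ≤ x_j ⟺ i ≺ j } associated with a weak total order ≺ on {1,…,n}. Then L_n has dimension exactly 2ⁿ - 1, and the functions f_Δ(x) := max_{i∈Δ} x_i, for nonempty Δ ⊆ {1,…,n}, form a basis of L_n. -/
open Finset

namespace Stmt15
variable {n : ℕ}

/-- The vector that is `-1` on `S` and `0` elsewhere. -/
def vS (S : Finset (Fin n)) : Fin n → ℝ := fun i => if i ∈ S then (-1:ℝ) else 0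

lemma sup'_vS (Δ : Finset (Fin n)) (h : Δ.Nonempty) (S : Finset (Fin n)) :
    Δ.sup' h (vS S) = if Δ ⊆ S then (-1:ℝ) else 0 := by
  split_ifs with hsub
  · rw [show Δ.sup' h (vS S) = Δ.sup' h (fun _ => (-1:ℝ)) from
      Finset.sup'_congr h rfl (fun i hi => by simp [vS, hsub hi])]
    exact Finset.sup'_const h _
  · obtain ⟨i, hiΔ, hiS⟩ := Finset.not_subset.mp hsub
    refine le_antisymm (Finset.sup'_le h _ fun j hj => ?_) ?_
    · unfold vS; split <;> norm_num
    · have : vS S i = 0 := by simp [vS, hiS]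
      calc (0:ℝ) = vS S i := this.symm
      _ ≤ _ := Finset.le_sup' (vS S) hiΔ

lemma key_inj (c : {s : Finset (Fin n) // s.Nonempty} → ℝ)
    (h : ∀ S : {s : Finset (Fin n) // s.Nonempty},
      ∑ Δ : {s : Finset (Fin n) // s.Nonempty}, (if Δ.1 ⊆ S.1 then c Δ else 0) = 0) :
    ∀ Δ, c Δ = 0 := by
  intro Δ
  induction' hk : Δ.1.card using Nat.strong_induction_on with k ih generalizing Δ
  have h0 := h Δ
  have : ∀ Δ' : {s : Finset (Fin n) // s.Nonempty},
      (if Δ'.1 ⊆ Δ.1 then c Δ' else 0) = (if Δ' = Δ then c Δ else 0) := by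
    intro Δ'
    by_cases hsub : Δ'.1 ⊆ Δ.1
    · by_cases heq : Δ' = Δ
      · simp [hsub, heq]
      · have hss : Δ'.1 ⊂ Δ.1 := ssubset_of_subset_of_ne hsub (fun hh => heq (Subtype.ext hh))
        have : c Δ' = 0 := ih Δ'.1.card (hk ▸ Finset.card_lt_card hss) Δ' rfl
        simp [hsub, heq, this]
    · have heq : Δ' ≠ Δ := fun hh => hsub (hh ▸ subset_rfl)
      simp [hsub, heq]
  rw [Finset.sum_congr rfl (fun Δ' _ => this Δ')] at h0
  simpa using h0

lemma exists_rmax (r : Fin n → Fin n → Prop) (htr : Transitive r)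
    (htot : ∀ i j, r i j ∨ r j i) (Δ : Finset (Fin n)) (h : Δ.Nonempty) :
    ∃ i ∈ Δ, ∀ j ∈ Δ, r j i := by
  induction Δ using Finset.induction_on with
  | empty => exact absurd h (by simp)
  | @insert a s ha ih =>
    by_cases hs : s.Nonempty
    · obtain ⟨i, hi, hmax⟩ := ih hs
      rcases htot a i with hai | hia
      · exact ⟨i, Finset.mem_insert_of_mem hi, fun j hj => by
          rcases Finset.mem_insert.mp hj with rfl | hj
          · exact hai
          · exact hmax j hj⟩
      · exact ⟨a, Finset.mem_insert_self a s, fun j hj => by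
          rcases Finset.mem_insert.mp hj with rfl | hj
          · rcases htot j j with hh | hh <;> exact hh
          · exact htr (hmax j hj) hia⟩
    · rw [Finset.not_nonempty_iff_eq_empty] at hs
      subst hs
      exact ⟨a, Finset.mem_insert_self a _, fun j hj => by
        rcases Finset.mem_insert.mp hj with rfl | hj
        · rcases htot j j with hh | hh <;> exact hh
        · simp at hj⟩

lemma sup'_chamber (r : Fin n → Fin n → Prop) (Δ : Finset (Fin n)) (h : Δ.Nonempty)
    (i₀ : Fin n) (hi₀ : i₀ ∈ Δ) (hmax : ∀ j ∈ Δ, r j i₀)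
    (x : Fin n → ℝ) (hx : ∀ i j, r i j → x i ≤ x j) :
    Δ.sup' h x = x i₀ :=
  le_antisymm (Finset.sup'_le h x fun j hj => hx j i₀ (hmax j hj)) (Finset.le_sup' x hi₀)

/-- If `f` is continuous and agrees with a linear map on the open cell of the total
order induced by `σ`, it agrees with it on the closed chamber. -/
lemma closed_chamber_eq (f : (Fin n → ℝ) → ℝ) (hfc : Continuous f)
    (σ : Equiv.Perm (Fin n)) (l : (Fin n → ℝ) →ₗ[ℝ] ℝ)
    (hl : ∀ z : Fin n → ℝ, (∀ i j, z i ≤ z j ↔ σ.symm i ≤ σ.symm j) → f z = l z)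
    (x : Fin n → ℝ) (hx : ∀ i j, σ.symm i ≤ σ.symm j → x i ≤ x j) : f x = l x := by
  set v : Fin n → ℝ := fun i => ((σ.symm i : ℕ) : ℝ) with hv
  have hcell : ∀ ε : ℝ, 0 < ε → ∀ i j, (x + ε • v) i ≤ (x + ε • v) j ↔ σ.symm i ≤ σ.symm j := by
    intro ε hε i j
    constructor
    · intro hle
      by_contra hc
      push_neg at hc
      have hlt : σ.symm j < σ.symm i := hc
      have h1 : x j ≤ x i := hx j i hlt.le
      have h2 : v j < v i := by
        simp only [hv]
        exact_mod_cast Fin.lt_iff_val_lt_val.mp hlt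
      have : (x + ε • v) j < (x + ε • v) i := by
        simp only [Pi.add_apply, Pi.smul_apply, smul_eq_mul]
        nlinarith
      linarith [hle, this]
    · intro hle
      rcases eq_or_lt_of_le hle with heq | hlt
      · have : i = j := σ.symm.injective heq
        subst this; rfl
      · have h1 : x i ≤ x j := hx i j hle
        have h2 : v i < v j := by
          simp only [hv]
          exact_mod_cast Fin.lt_iff_val_lt_val.mp hlt
        simp only [Pi.add_apply, Pi.smul_apply, smul_eq_mul]
        nlinarith
  have hlc : Continuous l := l.continuous_of_finiteDimensional
  have hpath : Continuous (fun ε : ℝ => x + ε • v) := by continuity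
  have htf : Filter.Tendsto (fun ε : ℝ => f (x + ε • v)) (nhdsWithin 0 (Set.Ioi 0))
      (nhds (f x)) := by
    have := (hfc.comp hpath).tendsto 0
    simp only [Function.comp_def, zero_smul, add_zero] at this
    exact this.mono_left nhdsWithin_le_nhds
  have htl : Filter.Tendsto (fun ε : ℝ => l (x + ε • v)) (nhdsWithin 0 (Set.Ioi 0))
      (nhds (l x)) := by
    have := (hlc.comp hpath).tendsto 0
    simp only [Function.comp_def, zero_smul, add_zero] at this
    exact this.mono_left nhdsWithin_le_nhds
  have heq : (fun ε : ℝ => f (x + ε • v)) =ᶠ[nhdsWithin 0 (Set.Ioi 0)]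
      (fun ε : ℝ => l (x + ε • v)) := by
    filter_upwards [self_mem_nhdsWithin] with ε hε
    exact hl _ (hcell ε hε)
  exact tendsto_nhds_unique (htf.congr' heq) htl

def Yv (σ : Equiv.Perm (Fin n)) (x : Fin n → ℝ) (k : ℕ) : ℝ :=
  if h : k < n then x (σ ⟨k, h⟩) else 0

def Uk (σ : Equiv.Perm (Fin n)) (k : ℕ) : Finset (Fin n) :=
  Finset.univ.filter (fun i => ((σ.symm i : ℕ) ≤ k))

lemma decomp (σ : Equiv.Perm (Fin n)) (x : Fin n → ℝ) :
    x = ∑ k ∈ Finset.range n, (Yv σ x (k+1) - Yv σ x k) • vS (Uk σ k) := by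
  funext i
  rw [Finset.sum_apply]
  simp only [Pi.smul_apply, smul_eq_mul]
  set p : ℕ := (σ.symm i : ℕ) with hp
  have hpn : p < n := (σ.symm i).isLt
  have hvi : ∀ k : ℕ, vS (Uk σ k) i = if p ≤ k then (-1:ℝ) else 0 := by
    intro k; simp [vS, Uk, hp]
  have hterm : ∀ k : ℕ, (Yv σ x (k+1) - Yv σ x k) * vS (Uk σ k) i
      = if p ≤ k then -(Yv σ x (k+1) - Yv σ x k) else 0 := by
    intro k; rw [hvi k]; split_ifs <;> ring
  rw [Finset.sum_congr rfl (fun k _ => hterm k), ← Finset.sum_filter]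
  have hfilter : (Finset.range n).filter (fun k => p ≤ k) = Finset.Ico p n := by
    ext k; simp [Finset.mem_Ico]; omega
  rw [hfilter, Finset.sum_neg_distrib, Finset.sum_Ico_eq_sub _ hpn.le,
    Finset.sum_range_sub (Yv σ x), Finset.sum_range_sub (Yv σ x)]
  have hYn : Yv σ x n = 0 := by simp [Yv]
  have hYp : Yv σ x p = x i := by
    simp only [Yv, dif_pos hpn]
    congr 1
    have : (⟨p, hpn⟩ : Fin n) = σ.symm i := by ext; simp [hp]
    rw [this, Equiv.apply_symm_apply]
  rw [hYn, hYp]; ring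

/-- The "zeta transform" as a linear endomorphism. -/
def Tmap (n : ℕ) : ({s : Finset (Fin n) // s.Nonempty} → ℝ) →ₗ[ℝ]
    ({s : Finset (Fin n) // s.Nonempty} → ℝ) where
  toFun c := fun S => ∑ Δ ∈ Finset.univ.filter
      (fun Δ : {s : Finset (Fin n) // s.Nonempty} => Δ.1 ⊆ S.1), c Δ
  map_add' c d := by funext S; exact Finset.sum_add_distrib
  map_smul' a c := by funext S; simp [Finset.mul_sum]

lemma Tmap_inj : Function.Injective (Tmap n) := by
  intro c d h
  funext Δ
  have hzero : ∀ S : {s : Finset (Fin n) // s.Nonempty},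
      ∑ Δ' : {s : Finset (Fin n) // s.Nonempty},
        (if Δ'.1 ⊆ S.1 then (c - d) Δ' else 0) = 0 := by
    intro S
    have h1 := congrFun h S
    simp only [Tmap, LinearMap.coe_mk, AddHom.coe_mk] at h1
    rw [← Finset.sum_filter]
    simp only [Pi.sub_apply]
    rw [Finset.sum_sub_distrib, h1, sub_self]
  have := key_inj (c - d) hzero Δ
  rw [Pi.sub_apply, sub_eq_zero] at this
  exact this

lemma Uk_nonempty (hn : 1 ≤ n) (σ : Equiv.Perm (Fin n)) (k : ℕ) : (Uk σ k).Nonempty := by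
  refine ⟨σ ⟨0, hn⟩, ?_⟩
  simp [Uk]

lemma Uk_chamber (σ : Equiv.Perm (Fin n)) (k : ℕ) :
    ∀ i j, σ.symm i ≤ σ.symm j → vS (Uk σ k) i ≤ vS (Uk σ k) j := by
  intro i j hij
  have hval : ((σ.symm i : ℕ)) ≤ ((σ.symm j : ℕ)) := hij
  simp only [vS, Uk, Finset.mem_filter, Finset.mem_univ, true_and]
  split_ifs with h1 h2 h2 <;> try norm_num
  exact absurd (le_trans hval h2) h1

end Stmt15

namespace Stmt15

def Lsub (n : ℕ) : Submodule ℝ ((Fin n → ℝ) → ℝ) where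
  carrier := {f : (Fin n → ℝ) → ℝ | Continuous f ∧
      ∀ r : Fin n → Fin n → Prop, Reflexive r → Transitive r →
        (∀ i j, r i j ∨ r j i) →
        ∃ l : (Fin n → ℝ) →ₗ[ℝ] ℝ,
          ∀ x : Fin n → ℝ, (∀ i j, x i ≤ x j ↔ r i j) → f x = l x}
  add_mem' := by
    rintro f g ⟨hfc, hfl⟩ ⟨hgc, hgl⟩
    refine ⟨hfc.add hgc, fun r h1 h2 h3 => ?_⟩
    obtain ⟨lf, hlf⟩ := hfl r h1 h2 h3
    obtain ⟨lg, hlg⟩ := hgl r h1 h2 h3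
    exact ⟨lf + lg, fun x hx => by simp [hlf x hx, hlg x hx]⟩
  zero_mem' := ⟨continuous_const, fun r h1 h2 h3 => ⟨0, fun x hx => by simp⟩⟩
  smul_mem' := by
    rintro a f ⟨hfc, hfl⟩
    refine ⟨hfc.const_smul a, fun r h1 h2 h3 => ?_⟩
    obtain ⟨lf, hlf⟩ := hfl r h1 h2 h3
    exact ⟨a • lf, fun x hx => by simp [hlf x hx]⟩

end Stmt15
open Finset Stmt15 in
/-- The functions `f_Δ(x) = max_{i ∈ Δ} x_i`, for nonempty `Δ ⊆ {1,…,n}`, form a basis of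
the space `L_n` of continuous functions `ℝⁿ → ℝ` that are linear on each cell of a weak
total order; in particular `L_n` has dimension `2^n - 1`. -/
theorem stmt15 (n : ℕ) (hn : 1 ≤ n) :
    LinearIndependent ℝ (fun Δ : {s : Finset (Fin n) // s.Nonempty} =>
        (fun x : Fin n → ℝ => Δ.1.sup' Δ.2 x)) ∧
      (Submodule.span ℝ (Set.range (fun Δ : {s : Finset (Fin n) // s.Nonempty} =>
            (fun x : Fin n → ℝ => Δ.1.sup' Δ.2 x))) : Set ((Fin n → ℝ) → ℝ))
        = {f : (Fin n → ℝ) → ℝ | Continuous f ∧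
            ∀ r : Fin n → Fin n → Prop, Reflexive r → Transitive r →
              (∀ i j, r i j ∨ r j i) →
              ∃ l : (Fin n → ℝ) →ₗ[ℝ] ℝ,
                ∀ x : Fin n → ℝ, (∀ i j, x i ≤ x j ↔ r i j) → f x = l x} ∧
      Nat.card {s : Finset (Fin n) // s.Nonempty} = 2 ^ n - 1 := by
  classical
  refine ⟨?_, ?_, ?_⟩
  · -- linear independence
    rw [Fintype.linearIndependent_iff]
    intro c hc Δ
    refine key_inj c (fun S => ?_) Δ
    have h1 := congrFun hc (vS S.1)
    rw [Finset.sum_apply] at h1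
    simp only [Pi.smul_apply, smul_eq_mul, Pi.zero_apply] at h1
    have h2 : ∀ Δ' : {s : Finset (Fin n) // s.Nonempty},
        c Δ' * (Δ'.1.sup' Δ'.2 (vS S.1)) = -(if Δ'.1 ⊆ S.1 then c Δ' else 0) := by
      intro Δ'
      rw [sup'_vS]
      split_ifs <;> ring
    rw [Finset.sum_congr rfl (fun Δ' _ => h2 Δ'), Finset.sum_neg_distrib,
      neg_eq_zero] at h1
    exact h1
  · -- span equality
    show _ = (Lsub n : Set ((Fin n → ℝ) → ℝ))
    apply Set.Subset.antisymm
    · apply SetLike.coe_subset_coe.mpr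
      apply Submodule.span_le.mpr
      rintro _ ⟨Δ, rfl⟩
      constructor
      · exact Continuous.finset_sup'_apply Δ.2 (fun i _ => continuous_apply i)
      · intro r hrefl htrans htot
        obtain ⟨i₀, hi₀, hmax⟩ := exists_rmax r htrans htot Δ.1 Δ.2
        refine ⟨LinearMap.proj i₀, fun x hx => ?_⟩
        show Δ.1.sup' Δ.2 x = _
        rw [sup'_chamber r Δ.1 Δ.2 i₀ hi₀ hmax x (fun i j hij => (hx i j).mpr hij)]
        rfl
    · rintro f ⟨hfc, hfl⟩
      obtain ⟨c, hc⟩ := (LinearMap.injective_iff_surjective.mp Tmap_inj)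
        (fun S : {s : Finset (Fin n) // s.Nonempty} => -(f (vS S.1)))
      have hgf : ∀ S : {s : Finset (Fin n) // s.Nonempty},
          (∑ Δ : {s : Finset (Fin n) // s.Nonempty}, c Δ * (Δ.1.sup' Δ.2 (vS S.1)))
            = f (vS S.1) := by
        intro S
        have hTc := congrFun hc S
        simp only [Tmap, LinearMap.coe_mk, AddHom.coe_mk] at hTc
        have hterm : ∀ Δ : {s : Finset (Fin n) // s.Nonempty},
            c Δ * (Δ.1.sup' Δ.2 (vS S.1)) = -(if Δ.1 ⊆ S.1 then c Δ else 0) := by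
          intro Δ; rw [sup'_vS]; split_ifs <;> ring
        rw [Finset.sum_congr rfl (fun Δ _ => hterm Δ), Finset.sum_neg_distrib,
          ← Finset.sum_filter, hTc, neg_neg]
      have hmain : f = ∑ Δ : {s : Finset (Fin n) // s.Nonempty},
          c Δ • (fun x : Fin n → ℝ => Δ.1.sup' Δ.2 x) := by
        funext x
        rw [Finset.sum_apply]
        simp only [Pi.smul_apply, smul_eq_mul]
        set σ : Equiv.Perm (Fin n) := Tuple.sort x with hσ
        have hmono : Monotone (x ∘ σ) := Tuple.monotone_sort x
        have hx : ∀ i j, σ.symm i ≤ σ.symm j → x i ≤ x j := by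
          intro i j hij
          have := hmono hij
          simpa using this
        obtain ⟨l, hl⟩ := hfl (fun i j => σ.symm i ≤ σ.symm j)
          (fun i => le_refl _) (fun _ _ _ h1 h2 => le_trans h1 h2)
          (fun i j => le_total _ _)
        choose i₀ hi₀mem hi₀max using fun Δ : {s : Finset (Fin n) // s.Nonempty} =>
          exists_rmax (fun i j => σ.symm i ≤ σ.symm j)
            (fun _ _ _ h1 h2 => le_trans h1 h2) (fun i j => le_total _ _) Δ.1 Δ.2
        set Lg : (Fin n → ℝ) →ₗ[ℝ] ℝ :=
          ∑ Δ : {s : Finset (Fin n) // s.Nonempty}, c Δ • LinearMap.proj (i₀ Δ) with hLgdef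
        have hLg : ∀ z : Fin n → ℝ,
            Lg z = ∑ Δ : {s : Finset (Fin n) // s.Nonempty}, c Δ * z (i₀ Δ) := by
          intro z
          rw [hLgdef]
          simp [LinearMap.sum_apply]
        have hgz : ∀ z : Fin n → ℝ, (∀ i j, σ.symm i ≤ σ.symm j → z i ≤ z j) →
            (∑ Δ : {s : Finset (Fin n) // s.Nonempty}, c Δ * (Δ.1.sup' Δ.2 z)) = Lg z := by
          intro z hz
          rw [hLg]
          refine Finset.sum_congr rfl fun Δ _ => ?_
          rw [sup'_chamber _ Δ.1 Δ.2 (i₀ Δ) (hi₀mem Δ) (hi₀max Δ) z hz]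
        have hdec := decomp σ x
        have hcc : ∀ z : Fin n → ℝ, (∀ i j, σ.symm i ≤ σ.symm j → z i ≤ z j) →
            f z = l z := fun z hz => closed_chamber_eq f hfc σ l hl z hz
        have hfx : f x = ∑ k ∈ Finset.range n,
            (Yv σ x (k+1) - Yv σ x k) * f (vS (Uk σ k)) := by
          rw [hcc x hx]
          conv_lhs => rw [hdec]
          rw [map_sum]
          refine Finset.sum_congr rfl fun k _ => ?_
          rw [map_smul, smul_eq_mul, hcc _ (Uk_chamber σ k)]
        have hgx : (∑ Δ : {s : Finset (Fin n) // s.Nonempty}, c Δ * (Δ.1.sup' Δ.2 x))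
            = ∑ k ∈ Finset.range n, (Yv σ x (k+1) - Yv σ x k) *
              (∑ Δ : {s : Finset (Fin n) // s.Nonempty},
                c Δ * (Δ.1.sup' Δ.2 (vS (Uk σ k)))) := by
          rw [hgz x hx]
          conv_lhs => rw [hdec]
          rw [map_sum]
          refine Finset.sum_congr rfl fun k _ => ?_
          rw [map_smul, smul_eq_mul, hgz _ (Uk_chamber σ k)]
        rw [hfx, hgx]
        refine Finset.sum_congr rfl fun k _ => ?_
        rw [hgf ⟨Uk σ k, Uk_nonempty hn σ k⟩]
      rw [hmain]
      exact Submodule.sum_mem _ fun Δ _ =>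
        Submodule.smul_mem _ _ (Submodule.subset_span ⟨Δ, rfl⟩)
  · -- cardinality
    rw [Nat.card_eq_fintype_card]
    have h1 : Fintype.card {s : Finset (Fin n) // ¬ s.Nonempty} = 1 := by
      refine Fintype.card_eq_one_iff.mpr ⟨⟨∅, by simp⟩, fun y => Subtype.ext ?_⟩
      simpa [Finset.not_nonempty_iff_eq_empty] using y.2
    have h2 := Fintype.card_subtype_compl (p := fun s : Finset (Fin n) => s.Nonempty)
    have h3 : Fintype.card (Finset (Fin n)) = 2 ^ n := by
      rw [Fintype.card_finset, Fintype.card_fin]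
    have h4 : Fintype.card {s : Finset (Fin n) // s.Nonempty}
        ≤ Fintype.card (Finset (Fin n)) := Fintype.card_subtype_le _
    omega
end

section
/- Let μ be a finite measure on a Polish space E, written μ = λ μ' with λ ≥ 0 and μ' a probability measure. Let (X_i)_{i≥1} be i.i.d. with law μ', let N be an independent Poisson random variable with mean λ, and set ν := Σ_{i=1}^N δ_{X_i}. Then for every Borel measurable f : E → [0,1], E[ Π_{i=1}^N (1 - f(X_i)) ] = exp( - ∫ f dμ ). -/
/-! Since `N` is independent of `(X_i)`, conditioning on `N = k` turns the expectation into
`∑ₖ P(N = k) E[∏_{i<k} (1 - f(X_i))]`. By independence and identical distribution the inner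
expectation is `a^k` with `a = 1 - ∫ f dμ'`, and the Poisson generating function
`E[a^N] = exp(λ(a - 1))` then gives `exp(-λ ∫ f dμ')`. -/

open MeasureTheory ProbabilityTheory
open scoped NNReal

namespace ProbabilityTheory

variable {Ω : Type*} [MeasurableSpace Ω] {P : Measure Ω}

theorem IndepFun.integral_comp_eq_integral_integral_map [IsFiniteMeasure P]
    {α β : Type*} [MeasurableSpace α] [MeasurableSpace β] {N : Ω → α} {Y : Ω → β}
    (hN : Measurable N) (hY : Measurable Y) (hNY : IndepFun N Y P) {F : α → β → ℝ}
    (hF : Measurable (Function.uncurry F)) {C : ℝ} (hFC : ∀ a y, ‖F a y‖ ≤ C) :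
    ∫ ω, F (N ω) (Y ω) ∂P = ∫ a, ∫ ω, F a (Y ω) ∂P ∂(P.map N) := by
  have hint : Integrable (Function.uncurry F) ((P.map N).prod (P.map Y)) :=
    .of_bound hF.aestronglyMeasurable C (ae_of_all _ fun _ => hFC _ _)
  calc ∫ ω, F (N ω) (Y ω) ∂P
      = ∫ z, Function.uncurry F z ∂(P.map fun ω => (N ω, Y ω)) :=
        (integral_map (hN.prodMk hY).aemeasurable hF.aestronglyMeasurable).symm
    _ = ∫ a, ∫ y, F a y ∂(P.map Y) ∂(P.map N) := by
        rw [hNY.map_prod_eq_prod_map_map hN.aemeasurable hY.aemeasurable, integral_prod _ hint]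
        rfl
    _ = ∫ a, ∫ ω, F a (Y ω) ∂P ∂(P.map N) := by
        congr with a
        exact integral_map hY.aemeasurable (hF.comp measurable_prodMk_left).aestronglyMeasurable

theorem iIndepFun.integral_prod_comp_eq_pow {ι E : Type*} [MeasurableSpace E]
    {X : ι → Ω → E} (hX : iIndepFun X P) (mX : ∀ i, AEMeasurable (X i) P)
    {μ : Measure E} (hXμ : ∀ i, P.map (X i) = μ) {g : E → ℝ}
    (hg : AEStronglyMeasurable g μ) (s : Finset ι) :
    ∫ ω, ∏ i ∈ s, g (X i ω) ∂P = (∫ x, g x ∂μ) ^ s.card := by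
  have hXs : iIndepFun (fun i : s => X i) P := hX.precomp Subtype.val_injective
  calc ∫ ω, ∏ i ∈ s, g (X i ω) ∂P
      = ∫ ω, ∏ i : s, g (X i ω) ∂P := by simp_rw [← Finset.prod_coe_sort s]
    _ = ∏ i : s, ∫ ω, g (X i ω) ∂P :=
        hXs.integral_fun_prod_comp (fun i => mX i) fun i => by rw [hXμ]; exact hg
    _ = (∫ x, g x ∂μ) ^ s.card := by
        have hlaw (i : ι) : ∫ ω, g (X i ω) ∂P = ∫ x, g x ∂μ := by
          rw [← integral_map (mX i) (hXμ i ▸ hg), hXμ]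
        simp [hlaw]

theorem integral_pow_poissonMeasure (r : ℝ≥0) (a : ℝ) :
    ∫ n, a ^ n ∂poissonMeasure r = Real.exp (r * (a - 1)) := by
  have hexp : HasSum (fun n : ℕ => (r * a) ^ n / n.factorial) (Real.exp (r * a)) := by
    simpa [Real.exp_eq_exp_ℝ] using NormedSpace.expSeries_div_hasSum_exp (r * a : ℝ)
  rw [integral_poissonMeasure, ((hexp.mul_left (Real.exp (-r))).congr_fun fun n => ?_).tsum_eq,
    ← Real.exp_add]
  · congr 1
    ring
  · simp only [smul_eq_mul, mul_pow]
    ring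

theorem map_eq_poissonMeasure {N : Ω → ℕ} (hN : Measurable N) {r : ℝ≥0}
    (hNr : ∀ k : ℕ, P {ω | N ω = k} = ENNReal.ofReal (Real.exp (-r) * r ^ k / k.factorial)) :
    P.map N = poissonMeasure r :=
  Measure.ext_of_singleton fun k => by
    rw [Measure.map_apply hN (measurableSet_singleton k), poissonMeasure_singleton]
    exact hNr k

end ProbabilityTheory

/-- Poissonization: if `ν = Σ_{i=1}^N δ_{X_i}` with `(X_i)` i.i.d. with law `μ'` and `N`
an independent Poisson(λ) variable, then `E[(1-f)^ν] = exp(-∫ f d(λμ'))` for every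
measurable `f : E → [0,1]`. -/
theorem stmt17 {E Ω : Type*} [MeasurableSpace E] [MeasurableSpace Ω]
    (P : Measure Ω) [IsProbabilityMeasure P]
    (lam : ℝ) (hlam : 0 ≤ lam) (μ' : Measure E) [IsProbabilityMeasure μ']
    (X : ℕ → Ω → E) (hXmeas : ∀ i, Measurable (X i))
    (hXlaw : ∀ i, P.map (X i) = μ')
    (hXindep : iIndepFun X P)
    (N : Ω → ℕ) (hNmeas : Measurable N)
    (hNlaw : ∀ k : ℕ,
      P {ω | N ω = k} = ENNReal.ofReal (Real.exp (-lam) * lam ^ k / (Nat.factorial k)))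
    (hNindep : IndepFun N (fun ω i => X i ω) P) :
    ∀ f : E → ℝ, Measurable f → (∀ y, f y ∈ Set.Icc (0 : ℝ) 1) →
      ∫ ω, ∏ i ∈ Finset.range (N ω), (1 - f (X i ω)) ∂P
        = Real.exp (-(lam * ∫ y, f y ∂μ')) := by
  intro f hf hf01
  lift lam to ℝ≥0 using hlam
  have hf_int : Integrable f μ' := .of_mem_Icc 0 1 hf.aemeasurable (ae_of_all _ hf01)
  have hF : Measurable
      (Function.uncurry fun k (v : ℕ → E) => ∏ i ∈ Finset.range k, (1 - f (v i))) :=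
    measurable_from_prod_countable_right fun k =>
      Finset.measurable_fun_prod (Finset.range k) fun i _ => by fun_prop
  have hF_le (k : ℕ) (v : ℕ → E) : ‖∏ i ∈ Finset.range k, (1 - f (v i))‖ ≤ 1 := by
    rw [norm_prod]
    exact Finset.prod_le_one (fun _ _ => norm_nonneg _) fun i _ => by
      rw [Real.norm_of_nonneg] <;> linarith [(hf01 (v i)).1, (hf01 (v i)).2]
  have hmoments (k : ℕ) :
      ∫ ω, ∏ i ∈ Finset.range k, (1 - f (X i ω)) ∂P = (1 - ∫ y, f y ∂μ') ^ k := by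
    rw [hXindep.integral_prod_comp_eq_pow (fun i => (hXmeas i).aemeasurable) hXlaw
      (g := fun y => 1 - f y) (by fun_prop) (Finset.range k), Finset.card_range,
      integral_sub (integrable_const 1) hf_int]
    simp
  rw [hNindep.integral_comp_eq_integral_integral_map hNmeas (measurable_pi_lambda _ hXmeas)
      hF hF_le, map_eq_poissonMeasure hNmeas hNlaw]
  simp_rw [hmoments, integral_pow_poissonMeasure]
  congr 1
  ring
end
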